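/- arXiv:1310.1842 — 3 statements merged into one kernel-verified Lean document; each statement's English description precedes it below -/
import Mathlib

section
/- (Proposition, property (iii).) Let t ∈ H be nonzero and let φ be a group automorphism of H with induced ring automorphism Φ of R. Let α ∈ R be irreducible, supported on ℤt, and with at least two elements in its support, and let β ∈ R be nonzero and supported on ℤt. Then Γ_{α,Φ}(β) = Γ_{α,id}(β), where id denotes the identity ring automorphism of R. -/
/-!
Context: `H n = Fin n →₀ ℤ` is the free abelian group of rank `n`, and
`R n = AddMonoidAlgebra ℤ (H n)` is its integral group ring, i.e. the ring of
Laurent polynomials in `n` variables over `ℤ`.  For `h ∈ H n`, the basis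
element `[h]` of `R n` is `AddMonoidAlgebra.single h 1`.
-/

noncomputable section

/-- `H n` is the free abelian group of rank `n`. -/
abbrev H (n : ℕ) : Type := Fin n →₀ ℤ

/-- `R n` is the integral group ring `ℤ[H n]`. -/
abbrev R (n : ℕ) : Type := AddMonoidAlgebra ℤ (H n)

/-- The ring automorphism `Φ` of `R n` induced by a group automorphism `φ` of `H n`;
it is determined by `Φ [h] = [φ h]`. -/
def inducedAut {n : ℕ} (φ : H n ≃+ H n) : RingAut (R n) :=
  (AddMonoidAlgebra.domCongr ℤ ℤ φ).toRingEquiv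

/-- The conjugation `C : x ↦ x̄`, the ring automorphism of `R n` induced by the
group automorphism `h ↦ -h` of `H n`. -/
def conjC (n : ℕ) : RingAut (R n) := inducedAut (AddEquiv.neg (H n))

/-- The augmentation ring homomorphism `ε : R n →+* ℤ`, with `ε [h] = 1` for all `h`. -/
def aug (n : ℕ) : R n →+* ℤ :=
  AddMonoidAlgebra.liftNCRingHom (RingHom.id ℤ) 1 (fun _ _ => Commute.all _ _)

/-- `x ∈ R n` is supported on `ℤ t`: every element of its support is an integer
multiple of `t`. -/
def SupportedOn {n : ℕ} (t : H n) (x : R n) : Prop :=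
  ∀ h ∈ x.coeff.support, ∃ k : ℤ, h = k • t

/-- The set of natural numbers `N` such that some product of `N` elements of `R n`,
each of which equals `Φ^m α` or `Φ^m ᾱ` for some integer `m`, divides `x`. -/
def GammaSet {n : ℕ} (α : R n) (Φ : RingAut (R n)) (x : R n) : Set ℕ :=
  {N | ∃ l : List (R n), l.length = N ∧
    (∀ y ∈ l, ∃ m : ℤ, y = (Φ ^ m) α ∨ y = (Φ ^ m) (conjC n α)) ∧ l.prod ∣ x}

/-- `Γ_{α,Φ}(x)`: the largest `N` in `GammaSet α Φ x`. -/
def Gamma {n : ℕ} (α : R n) (Φ : RingAut (R n)) (x : R n) : ℕ := sSup (GammaSet α Φ x)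

/-!
For `f : H n →+ ℤ`, the top and the bottom `f`-degree of elements of the domain `R n` are
additive on products. If `f t = 0`, then `f` vanishes on the support of `β`, so it is constant on
the support of every divisor of `β`. A divisor `Φ^m α = inducedAut ψ α` (with `ψ = m • φ`) has
`ψ (k • t)` and `ψ (l • t)`, `k ≠ l`, in its support, so `f (ψ t) = 0` whenever `f t = 0`; that
is, `ψ t ∈ ℚ t`. Since `ψ` preserves the gcd of the coordinates, `ψ t = ± t`, and then
`Φ^m α` is `α` or `ᾱ`. The same holds for `Φ^m ᾱ`, so the products counted by `Γ_{α,Φ}(β)` are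
exactly those counted by `Γ_{α,id}(β)`.
-/

namespace AddMonoidAlgebra

variable {k A B : Type*} [Semiring k] [AddMonoid A]

theorem coeff_mul_eq_zero_of_forall_add_ne {p q : k[A]} {c : A}
    (h : ∀ a ∈ p.coeff.support, ∀ b ∈ q.coeff.support, a + b ≠ c) : (p * q).coeff c = 0 := by
  classical
  by_contra hc
  obtain ⟨a, ha, b, hb, hab⟩ :=
    Finset.mem_add.1 (support_coeff_mul_subset p q (Finsupp.mem_support_iff.2 hc))
  exact h a ha b hb hab

variable [AddCommMonoid B] [LinearOrder B] [IsOrderedCancelAddMonoid B]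

/-- The top `f`-level of a product is the product of the top `f`-levels. -/
theorem coeff_mul_eq_coeff_mul_filter (f : A →+ B) {y z : k[A]} {My Mz : B}
    (hy : ∀ a ∈ y.coeff.support, f a ≤ My) (hz : ∀ b ∈ z.coeff.support, f b ≤ Mz)
    {c : A} (hc : f c = My + Mz) :
    (y * z).coeff c =
      (ofCoeff (y.coeff.filter (f · = My)) * ofCoeff (z.coeff.filter (f · = Mz))).coeff c := by
  classical
  set y₁ := ofCoeff (y.coeff.filter (f · = My))
  set y₂ := ofCoeff (y.coeff.filter (¬ f · = My))
  set z₁ := ofCoeff (z.coeff.filter (f · = Mz))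
  set z₂ := ofCoeff (z.coeff.filter (¬ f · = Mz))
  have hy₁₂ : y = y₁ + y₂ := ext (Finsupp.filter_add_filter_not _ _).symm
  have hz₁₂ : z = z₁ + z₂ := ext (Finsupp.filter_add_filter_not _ _).symm
  have h₁₂ : (y₁ * z₂).coeff c = 0 := by
    refine coeff_mul_eq_zero_of_forall_add_ne fun a ha b hb hab => ?_
    simp only [y₁, z₂, Finsupp.support_filter, Finset.mem_filter] at ha hb
    have := add_lt_add_of_le_of_lt ha.2.le ((hz b hb.1).lt_of_ne hb.2)
    rw [← map_add, hab, hc] at this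
    exact this.false
  have h₂ : (y₂ * z).coeff c = 0 := by
    refine coeff_mul_eq_zero_of_forall_add_ne fun a ha b hb hab => ?_
    simp only [y₂, Finsupp.support_filter, Finset.mem_filter] at ha
    have := add_lt_add_of_lt_of_le ((hy a ha.1).lt_of_ne ha.2) (hz b hb)
    rw [← map_add, hab, hc] at this
    exact this.false
  calc (y * z).coeff c = (y₁ * z₁ + y₁ * z₂ + y₂ * z).coeff c := by
        rw [← mul_add, ← hz₁₂, ← add_mul, ← hy₁₂]
    _ = (y₁ * z₁).coeff c := by simp only [coeff_add, Finsupp.add_apply, h₁₂, h₂, add_zero]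

theorem exists_max_add_mem_support_mul [NoZeroDivisors k[A]] (f : A →+ B) {y z : k[A]}
    (hy : y ≠ 0) (hz : z ≠ 0) :
    ∃ a ∈ y.coeff.support, ∃ b ∈ z.coeff.support, a + b ∈ (y * z).coeff.support ∧
      (∀ a' ∈ y.coeff.support, f a' ≤ f a) ∧ ∀ b' ∈ z.coeff.support, f b' ≤ f b := by
  classical
  obtain ⟨a₀, ha₀, hy_le⟩ := y.coeff.support.exists_max_image f (by simpa using hy)
  obtain ⟨b₀, hb₀, hz_le⟩ := z.coeff.support.exists_max_image f (by simpa using hz)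
  set y₁ := ofCoeff (y.coeff.filter (f · = f a₀))
  set z₁ := ofCoeff (z.coeff.filter (f · = f b₀))
  have hy₁ : y₁ ≠ 0 := ne_of_apply_ne (·.coeff a₀) (by simpa [y₁] using ha₀)
  have hz₁ : z₁ ≠ 0 := ne_of_apply_ne (·.coeff b₀) (by simpa [z₁] using hb₀)
  obtain ⟨c, hc⟩ := Finsupp.support_nonempty_iff.2 (mt coeff_eq_zero.1 (mul_ne_zero hy₁ hz₁))
  obtain ⟨a, ha, b, hb, rfl⟩ := Finset.mem_add.1 (support_coeff_mul_subset _ _ hc)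
  simp only [y₁, z₁, Finsupp.support_filter, Finset.mem_filter] at ha hb
  refine ⟨a, ha.1, b, hb.1, ?_, by rwa [ha.2], by rwa [hb.2]⟩
  rwa [Finsupp.mem_support_iff, coeff_mul_eq_coeff_mul_filter f hy_le hz_le
    (by rw [map_add, ha.2, hb.2]), ← Finsupp.mem_support_iff]

theorem forall_apply_eq_of_dvd [NoZeroDivisors k[A]] {β y : k[A]} (hβ : β ≠ 0) (hy : y ∣ β)
    (f : A →+ ℤ) (hf : ∀ a ∈ β.coeff.support, f a = 0) :
    ∀ a ∈ y.coeff.support, ∀ a' ∈ y.coeff.support, f a = f a' := by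
  obtain ⟨z, rfl⟩ := hy
  have hy₀ := left_ne_zero_of_mul hβ
  have hz₀ := right_ne_zero_of_mul hβ
  obtain ⟨a, -, b, -, hab, hy_le, hz_le⟩ := exists_max_add_mem_support_mul f hy₀ hz₀
  obtain ⟨a', -, b', hb', hab', hy_ge, -⟩ := exists_max_add_mem_support_mul (-f) hy₀ hz₀
  have hfab := hf _ hab
  have hfab' := hf _ hab'
  have hbb' := hz_le b' hb'
  simp only [map_add, AddMonoidHom.neg_apply] at hfab hfab' hy_ge
  intro x hx x' hx'
  linarith [hy_le x hx, hy_le x' hx', hy_ge x hx, hy_ge x' hx']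

end AddMonoidAlgebra

namespace Finsupp

variable {ι : Type*} [Fintype ι]

def content (v : ι →₀ ℤ) : ℤ := Finset.univ.gcd v

theorem content_nonneg (v : ι →₀ ℤ) : 0 ≤ content v := by
  rw [content, ← Finset.normalize_gcd, ← Int.abs_eq_normalize]
  exact abs_nonneg _

theorem content_dvd (v : ι →₀ ℤ) (i : ι) : content v ∣ v i :=
  Finset.gcd_dvd (Finset.mem_univ i)

theorem dvd_content {v : ι →₀ ℤ} {d : ℤ} (h : ∀ i, d ∣ v i) : d ∣ content v :=
  Finset.dvd_gcd fun i _ => h i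

theorem content_eq_zero_iff {v : ι →₀ ℤ} : content v = 0 ↔ v = 0 := by
  simp [content, Finset.gcd_eq_zero_iff, Finsupp.ext_iff]

theorem content_smul (a : ℤ) (v : ι →₀ ℤ) : content (a • v) = |a| * content v := by
  rw [content, content, Int.abs_eq_normalize, ← Finset.gcd_mul_left]
  rfl

theorem exists_eq_content_smul (v : ι →₀ ℤ) : ∃ w, v = content v • w :=
  ⟨v.mapRange (· / content v) (by simp), ext fun i => by
    simp [Int.mul_ediv_cancel' (content_dvd v i)]⟩

theorem content_dvd_content_map (ψ : (ι →₀ ℤ) →+ (ι →₀ ℤ)) (v : ι →₀ ℤ) :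
    content v ∣ content (ψ v) := by
  obtain ⟨w, hw⟩ := exists_eq_content_smul v
  have hψv : ψ v = content v • ψ w := by rw [← map_zsmul, ← hw]
  exact dvd_content fun i => by simp [hψv]

theorem content_map (ψ : (ι →₀ ℤ) ≃+ (ι →₀ ℤ)) (v : ι →₀ ℤ) : content (ψ v) = content v :=
  Int.dvd_antisymm (content_nonneg _) (content_nonneg _)
    (by simpa using content_dvd_content_map ψ.symm.toAddMonoidHom (ψ v))
    (content_dvd_content_map ψ.toAddMonoidHom v)

/-- The hypothesis says that `ψ t ∈ ℚ t`; as `ψ` preserves the content, the factor is `±1`. -/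
theorem eq_or_eq_neg_of_forall_apply_eq_zero (ψ : (ι →₀ ℤ) ≃+ (ι →₀ ℤ)) {t : ι →₀ ℤ}
    (h : ∀ f : (ι →₀ ℤ) →+ ℤ, f t = 0 → f (ψ t) = 0) : ψ t = t ∨ ψ t = -t := by
  obtain rfl | ht := eq_or_ne t 0
  · simp
  obtain ⟨i, hti⟩ : ∃ i, t i ≠ 0 := by simpa [Finsupp.ext_iff] using ht
  set u := ψ t
  have hrel : t i • u = u i • t := by
    ext j
    have := h ((t j) • applyAddHom i - (t i) • applyAddHom j) (by simp [mul_comm])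
    simp only [AddMonoidHom.sub_apply, AddMonoidHom.smul_apply, applyAddHom_apply,
      smul_eq_mul] at this
    simp only [coe_smul, Pi.smul_apply, smul_eq_mul]
    linarith
  have habs : |t i| = |u i| := by
    have hcont := congrArg content hrel
    rw [content_smul, content_smul, content_map] at hcont
    exact mul_right_cancel₀ (mt content_eq_zero_iff.1 ht) hcont
  have hinj := smul_right_injective (ι →₀ ℤ) hti
  rcases abs_eq_abs.1 habs with hi | hi
  · exact .inl (hinj (by simpa [← hi] using hrel))
  · exact .inr (hinj (by simpa [← neg_eq_iff_eq_neg.2 hi] using hrel))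

end Finsupp

section InducedAut

variable {n : ℕ}

theorem coeff_inducedAut (φ : H n ≃+ H n) (x : R n) :
    (inducedAut φ x).coeff = x.coeff.equivMapDomain φ :=
  AddMonoidAlgebra.coeff_mapDomainRingEquiv ..

theorem support_inducedAut (φ : H n ≃+ H n) (x : R n) :
    (inducedAut φ x).coeff.support = x.coeff.support.map (φ : H n ≃ H n).toEmbedding :=
  AddMonoidAlgebra.domCongr_support (R := ℤ) ..

theorem inducedAut_congr {φ χ : H n ≃+ H n} {x : R n} (h : ∀ a ∈ x.coeff.support, φ a = χ a) :
    inducedAut φ x = inducedAut χ x := by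
  ext1
  simp only [coeff_inducedAut, Finsupp.equivMapDomain_eq_mapDomain]
  exact Finsupp.mapDomain_congr h

theorem inducedAut_refl (x : R n) : inducedAut (AddEquiv.refl (H n)) x = x := by
  ext; simp [coeff_inducedAut]

/-- `AddAut` is an additive group, hence the `Multiplicative`. -/
def inducedAutHom (n : ℕ) : Multiplicative (AddAut (H n)) →* RingAut (R n) where
  toFun φ := inducedAut φ.toAdd
  map_one' := by ext; simp [inducedAut, AddAut.zero_def]
  map_mul' _ _ := by ext; simp [inducedAut, AddAut.add_def]

theorem inducedAut_zsmul (φ : AddAut (H n)) (m : ℤ) : inducedAut (m • φ) = inducedAut φ ^ m := by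
  have h := map_zpow (inducedAutHom n) (.ofAdd φ) m
  rw [← ofAdd_zsmul] at h
  exact h

theorem conjC_conjC (x : R n) : conjC n (conjC n x) = x := by
  ext; simp [conjC, coeff_inducedAut]

theorem card_support_conjC (x : R n) : (conjC n x).coeff.support.card = x.coeff.support.card := by
  rw [conjC, support_inducedAut, Finset.card_map]

end InducedAut

namespace SupportedOn

variable {n : ℕ} {t : H n}

theorem conjC {x : R n} (hx : SupportedOn t x) : SupportedOn t (conjC n x) := by
  intro a ha
  rw [_root_.conjC, support_inducedAut, Finset.mem_map] at ha
  obtain ⟨b, hb, rfl⟩ := ha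
  obtain ⟨k, rfl⟩ := hx b hb
  exact ⟨-k, by simp⟩

theorem inducedAut_congr {x : R n} (hx : SupportedOn t x) {φ χ : H n ≃+ H n} (h : φ t = χ t) :
    inducedAut φ x = inducedAut χ x :=
  _root_.inducedAut_congr fun a ha => by
    obtain ⟨k, rfl⟩ := hx a ha
    rw [map_zsmul, map_zsmul, h]

theorem forall_apply_eq_zero {x : R n} (hx : SupportedOn t x) {f : H n →+ ℤ} (hf : f t = 0) :
    ∀ a ∈ x.coeff.support, f a = 0 := fun a ha => by
  obtain ⟨k, rfl⟩ := hx a ha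
  rw [map_zsmul, hf, smul_zero]

theorem inducedAut_eq_or_eq_conjC_of_dvd {γ β : R n} (hγ : SupportedOn t γ)
    (hγcard : 2 ≤ γ.coeff.support.card) (hβ : β ≠ 0) (hβsupp : SupportedOn t β)
    {φ : H n ≃+ H n} (hdvd : inducedAut φ γ ∣ β) :
    inducedAut φ γ = γ ∨ inducedAut φ γ = _root_.conjC n γ := by
  obtain ⟨a, ha, b, hb, hab⟩ := Finset.one_lt_card.1 hγcard
  have hφ : ∀ f : H n →+ ℤ, f t = 0 → f (φ t) = 0 := by
    intro f hf
    have hconst := AddMonoidAlgebra.forall_apply_eq_of_dvd hβ hdvd f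
      (hβsupp.forall_apply_eq_zero hf) (φ a) (by simpa [support_inducedAut] using ha)
      (φ b) (by simpa [support_inducedAut] using hb)
    obtain ⟨k, rfl⟩ := hγ a ha
    obtain ⟨l, rfl⟩ := hγ b hb
    simp only [map_zsmul, smul_eq_mul] at hconst
    exact (mul_eq_mul_right_iff.1 hconst).resolve_left fun hkl => hab (by rw [hkl])
  rcases Finsupp.eq_or_eq_neg_of_forall_apply_eq_zero φ hφ with h | h
  · exact .inl ((hγ.inducedAut_congr h).trans (inducedAut_refl γ))
  · exact .inr (hγ.inducedAut_congr h)

end SupportedOn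

theorem gammaSet_eq_gammaSet_one {n : ℕ} {α x : R n} {Φ : RingAut (R n)}
    (h : ∀ (m : ℤ) (y : R n), (y = (Φ ^ m) α ∨ y = (Φ ^ m) (conjC n α)) → y ∣ x →
      y = α ∨ y = conjC n α) :
    GammaSet α Φ x = GammaSet α 1 x := by
  ext N
  constructor
  · rintro ⟨l, hlen, hl, hdvd⟩
    refine ⟨l, hlen, fun y hy => ⟨0, ?_⟩, hdvd⟩
    obtain ⟨m, hm⟩ := hl y hy
    simpa using h m y hm ((List.dvd_prod hy).trans hdvd)
  · rintro ⟨l, hlen, hl, hdvd⟩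
    refine ⟨l, hlen, fun y hy => ⟨0, ?_⟩, hdvd⟩
    obtain ⟨m, hm⟩ := hl y hy
    simpa using hm

theorem gamma_induced_eq_gamma_id_general {n : ℕ} (t : H n)
    (φ : H n ≃+ H n)
    (α : R n) (hαsupp : SupportedOn t α)
    (hαcard : 2 ≤ α.coeff.support.card)
    (β : R n) (hβ : β ≠ 0) (hβsupp : SupportedOn t β) :
    Gamma α (inducedAut φ) β = Gamma α 1 β := by
  rw [Gamma, Gamma, gammaSet_eq_gammaSet_one]
  rintro m y (rfl | rfl) hdvd <;> rw [← inducedAut_zsmul] at hdvd ⊢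
  · exact hαsupp.inducedAut_eq_or_eq_conjC_of_dvd hαcard hβ hβsupp hdvd
  · have hconj := hαsupp.conjC.inducedAut_eq_or_eq_conjC_of_dvd
      ((card_support_conjC α).symm ▸ hαcard) hβ hβsupp hdvd
    rwa [conjC_conjC, or_comm] at hconj

/-- **Proposition, property (iii).**  If `α` is irreducible, supported on `ℤ t`
with at least two elements in its support, and `β ≠ 0` is supported on `ℤ t`,
then `Γ_{α,Φ}(β) = Γ_{α,id}(β)` for the ring automorphism `Φ` induced by any
group automorphism `φ` of `H n`. -/
theorem gamma_induced_eq_gamma_id {n : ℕ} (t : H n) (ht : t ≠ 0)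
    (φ : H n ≃+ H n)
    (α : R n) (hα : Irreducible α) (hαsupp : SupportedOn t α)
    (hαcard : 2 ≤ α.coeff.support.card)
    (β : R n) (hβ : β ≠ 0) (hβsupp : SupportedOn t β) :
    Gamma α (inducedAut φ) β = Gamma α 1 β :=
  gamma_induced_eq_gamma_id_general t φ α hαsupp hαcard β hβ hβsupp
end
end

section
/- Every unit of the group ring R = AddMonoidAlgebra ℤ H of the free abelian group H = (Fin n →₀ ℤ) is a trivial unit: if u ∈ R is a unit, then u = [h] or u = -[h] for some h ∈ H. (This is the fact, used in the proof of property (iii), that the units of ℤ[H₂(X)] are all of the form ±h for h ∈ H₂(X) when H₂(X) is free abelian.) -/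
/-!
Context: `H n = Fin n →₀ ℤ` is the free abelian group of rank `n`, and
`R n = AddMonoidAlgebra ℤ (H n)` is its integral group ring, i.e. the ring of
Laurent polynomials in `n` variables over `ℤ`.  For `h ∈ H n`, the basis
element `[h]` of `R n` is `AddMonoidAlgebra.single h 1`.
-/

noncomputable section

/-!
Like any torsion-free abelian group, `H n` has two unique sums. If
`u * v = 1` and the supports of `u` and `v` are not both singletons, there are two distinct pairs
`(a, b)` of support elements whose sums are each attained only once; the coefficient of `[a + b]`
in `u * v` is then a nonzero product, so `a + b = 0` for both pairs, and a sum attained only once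
cannot be attained by a second pair. Hence `u = r [h]`, and applying the augmentation shows
`r = ±1`.
-/

namespace AddMonoidAlgebra

open Finset

variable {k G : Type*} [Semiring k] [NoZeroDivisors k] [AddMonoid G] [TwoUniqueSums G]

theorem card_support_mul_card_support_le_one_of_mul_eq_one {u v : k[G]} (huv : u * v = 1) :
    #u.coeff.support * #v.coeff.support ≤ 1 := by
  classical
  by_contra! hlt
  obtain ⟨p, hp, q, hq, hpq, hp_unique, hq_unique⟩ := TwoUniqueSums.uniqueAdd_of_one_lt_card hlt
  have add_eq_zero : ∀ a ∈ u.coeff.support, ∀ b ∈ v.coeff.support,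
      UniqueAdd u.coeff.support v.coeff.support a b → a + b = 0 := by
    intro a ha b hb hunique
    have hcoeff : (u * v).coeff (a + b) ≠ 0 := by
      rw [coeff_mul_add_of_uniqueAdd hunique]
      exact mul_ne_zero (Finsupp.mem_support_iff.mp ha) (Finsupp.mem_support_iff.mp hb)
    rw [huv, one_def, coeff_single, Finsupp.single_apply] at hcoeff
    exact (ite_ne_right_iff.mp hcoeff).1.symm
  rw [mem_product] at hp hq
  obtain ⟨hqp₁, hqp₂⟩ := hp_unique hq.1 hq.2 <|
    (add_eq_zero _ hq.1 _ hq.2 hq_unique).trans (add_eq_zero _ hp.1 _ hp.2 hp_unique).symm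
  exact hpq (Prod.ext hqp₁.symm hqp₂.symm)

theorem exists_eq_single_of_isUnit [Nontrivial k] {u : k[G]} (hu : IsUnit u) :
    ∃ a r, u = single a r := by
  obtain ⟨v, huv⟩ := hu.exists_right_inv
  have hv : 0 < #v.coeff.support :=
    card_pos.mpr (Finsupp.support_nonempty_iff.mpr (coeff_eq_zero.not.mpr
      (right_ne_zero_of_mul_eq_one huv)))
  obtain ⟨a, r, hu⟩ := Finsupp.card_support_le_one'.mp <|
    (Nat.le_mul_of_pos_right _ hv).trans (card_support_mul_card_support_le_one_of_mul_eq_one huv)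
  exact ⟨a, r, coeff_injective hu⟩

end AddMonoidAlgebra

/-- **Trivial units.**  Every unit of `R n = ℤ[H n]` is of the form `±[h]`. -/
theorem units_are_trivial {n : ℕ} (u : R n) (hu : IsUnit u) :
    ∃ h : H n, u = AddMonoidAlgebra.single h 1 ∨ u = -AddMonoidAlgebra.single h 1 := by
  obtain ⟨h, r, rfl⟩ := AddMonoidAlgebra.exists_eq_single_of_isUnit hu
  have hr : IsUnit r := by simpa [aug] using hu.map (aug n)
  rcases Int.isUnit_iff.mp hr with rfl | rfl
  exacts [⟨h, .inl rfl⟩, ⟨h, .inr (AddMonoidAlgebra.single_neg ..)⟩]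
end
end

section
/- (Computation of Γ for the identity automorphism.) Let α ∈ R be irreducible and let x ∈ R be nonzero. If α and ᾱ are not associates in R, then Γ_{α,id}(x) equals the multiplicity of α in x plus the multiplicity of ᾱ in x; if α and ᾱ are associates, then Γ_{α,id}(x) equals the multiplicity of α in x. (Here the multiplicity of an irreducible p in x is the largest k with p^k dividing x, and id is the identity ring automorphism of R.) -/
/-!
Context: `H n = Fin n →₀ ℤ` is the free abelian group of rank `n`, and
`R n = AddMonoidAlgebra ℤ (H n)` is its integral group ring, i.e. the ring of
Laurent polynomials in `n` variables over `ℤ`.  For `h ∈ H n`, the basis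
element `[h]` of `R n` is `AddMonoidAlgebra.single h 1`.
-/

noncomputable section

/-!
Clearing denominators by a monomial shows that the Laurent polynomial ring `k[σ →₀ ℤ]` is the
localization of `MvPolynomial σ k` at the monomials; a localization of a UFD is a UFD, so `α` and
`ᾱ` are prime in `R n`. For `Φ = id` the factors admitted in `Γ` are only `α` and `ᾱ`, so
`Γ_{α,id}(x)` is the largest `i + j` with `αⁱ ᾱʲ ∣ x`. For non-associate primes the two powers
divide `x` independently, giving `a + b`; if `α ~ ᾱ` then `αⁱ ᾱʲ ~ α^(i+j)`, giving `a`.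
-/

open AddMonoidAlgebra

namespace MvPolynomial

variable (σ k : Type*) [CommSemiring k]

def toLaurent : MvPolynomial σ k →+* AddMonoidAlgebra k (σ →₀ ℤ) :=
  mapDomainRingHom k (Finsupp.mapRange.addMonoidHom (Nat.castAddMonoidHom ℤ))

variable {σ k}

theorem toLaurent_monomial (m : σ →₀ ℕ) (c : k) :
    toLaurent σ k (monomial m c) = single (m.mapRange (↑) Nat.cast_zero) c := by
  simp [toLaurent, ← single_eq_monomial]

theorem toLaurent_injective : Function.Injective (toLaurent σ k) :=
  mapDomain_injective (Finsupp.mapRange_injective _ Nat.cast_zero Nat.cast_injective)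

theorem isUnit_toLaurent_monomial_one (m : σ →₀ ℕ) : IsUnit (toLaurent σ k (monomial m 1)) := by
  rw [toLaurent_monomial]
  exact IsUnit.of_mul_eq_one (single (-_) 1)
    (by rw [single_mul_single, add_neg_cancel, mul_one, AddMonoidAlgebra.one_def])

theorem exists_mul_toLaurent_monomial_eq_toLaurent (x : AddMonoidAlgebra k (σ →₀ ℤ)) :
    ∃ (m : σ →₀ ℕ) (p : MvPolynomial σ k),
      x * toLaurent σ k (monomial m 1) = toLaurent σ k p := by
  induction x using induction_linear with
  | zero => exact ⟨0, 0, by simp⟩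
  | add x y hx hy =>
    obtain ⟨m, p, hp⟩ := hx
    obtain ⟨m', q, hq⟩ := hy
    refine ⟨m + m', p * monomial m' 1 + q * monomial m 1, ?_⟩
    have hmul : toLaurent σ k (monomial (m + m') 1) =
        toLaurent σ k (monomial m 1) * toLaurent σ k (monomial m' 1) := by
      rw [← map_mul (toLaurent σ k), monomial_mul, mul_one]
    rw [hmul, map_add, map_mul (toLaurent σ k), map_mul (toLaurent σ k), ← hp, ← hq]
    ring
  | single g c =>
    refine ⟨g.mapRange (fun a => (-a).toNat) (by simp),
      monomial (g.mapRange Int.toNat (by simp)) c, ?_⟩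
    rw [toLaurent_monomial, toLaurent_monomial, single_mul_single, mul_one]
    congr 1
    ext i
    simp only [Finsupp.coe_add, Pi.add_apply, Finsupp.mapRange_apply]
    omega

theorem isLocalizationMap_toLaurent :
    (MonoidHom.mrange (monomialOneHom k σ)).IsLocalizationMap (toLaurent σ k) where
  map_units := by
    rintro ⟨_, m, rfl⟩
    exact isUnit_toLaurent_monomial_one _
  surj x := by
    obtain ⟨m, p, hp⟩ := exists_mul_toLaurent_monomial_eq_toLaurent x
    exact ⟨(p, ⟨monomial m 1, m, rfl⟩), hp⟩
  exists_of_eq h := ⟨1, by rw [toLaurent_injective h]⟩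

instance {k : Type*} [CommRing k] [IsDomain k] [UniqueFactorizationMonoid k] :
    UniqueFactorizationMonoid (AddMonoidAlgebra k (σ →₀ ℤ)) :=
  Submonoid.LocalizationMap.uniqueFactorizationMonoid
    ⟨(toLaurent σ k).toMonoidHom.toMulHom, isLocalizationMap_toLaurent⟩

end MvPolynomial

theorem List.exists_prod_eq_pow_mul_pow {M : Type*} [CommMonoid M] {a b : M} {l : List M}
    (hl : ∀ y ∈ l, y = a ∨ y = b) : ∃ i j, i + j = l.length ∧ l.prod = a ^ i * b ^ j := by
  induction l with
  | nil => exact ⟨0, 0, rfl, by simp⟩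
  | cons y t ih =>
    obtain ⟨i, j, hij, hprod⟩ := ih fun z hz => hl z (List.mem_cons_of_mem _ hz)
    rcases hl y List.mem_cons_self with rfl | rfl
    · exact ⟨i + 1, j, by simp [← hij]; omega,
        by rw [List.prod_cons, hprod, pow_succ', mul_assoc]⟩
    · exact ⟨i, j + 1, by simp [← hij]; omega,
        by rw [List.prod_cons, hprod, pow_succ', mul_left_comm]⟩

theorem isGreatest_pow_mul_pow_dvd_of_not_associated {M : Type*} [CommMonoidWithZero M]
    [IsCancelMulZero M] {p q x : M} {a b : ℕ} (hp : Irreducible p) (hq : Prime q)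
    (hpq : ¬ Associated p q) (ha : IsGreatest {k : ℕ | p ^ k ∣ x} a)
    (hb : IsGreatest {k : ℕ | q ^ k ∣ x} b) :
    IsGreatest {N : ℕ | ∃ i j : ℕ, i + j = N ∧ p ^ i * q ^ j ∣ x} (a + b) := by
  refine ⟨⟨a, b, rfl, ?_⟩, ?_⟩
  · obtain ⟨y, rfl⟩ := ha.1
    have hqp : ¬ q ∣ p ^ a := fun h =>
      hpq (hq.irreducible.associated_of_dvd hp (hq.dvd_of_dvd_pow h)).symm
    exact mul_dvd_mul_left _ (hq.pow_dvd_of_dvd_mul_left b hqp hb.1)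
  · rintro N ⟨i, j, rfl, hdvd⟩
    have hi : i ≤ a := ha.2 ((dvd_mul_right _ _).trans hdvd)
    have hj : j ≤ b := hb.2 ((dvd_mul_left _ _).trans hdvd)
    omega

theorem isGreatest_pow_mul_pow_dvd_of_associated {M : Type*} [CommMonoid M] {p q x : M}
    {a : ℕ} (hpq : Associated p q) (ha : IsGreatest {k : ℕ | p ^ k ∣ x} a) :
    IsGreatest {N : ℕ | ∃ i j : ℕ, i + j = N ∧ p ^ i * q ^ j ∣ x} a := by
  refine ⟨⟨a, 0, rfl, by simpa using ha.1⟩, ?_⟩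
  rintro N ⟨i, j, rfl, hdvd⟩
  refine ha.2 (Associated.dvd ?_ |>.trans hdvd)
  rw [pow_add]
  exact hpq.pow_pow.mul_left _

theorem gammaSet_one_eq {n : ℕ} (α x : R n) :
    GammaSet α 1 x = {N : ℕ | ∃ i j : ℕ, i + j = N ∧ α ^ i * conjC n α ^ j ∣ x} := by
  ext N
  constructor
  · rintro ⟨l, rfl, hl, hdvd⟩
    obtain ⟨i, j, hij, hprod⟩ := List.exists_prod_eq_pow_mul_pow (a := α) (b := conjC n α)
      (l := l) fun y hy => by obtain ⟨m, hm | hm⟩ := hl y hy <;> simp [hm]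
    exact ⟨i, j, hij, hprod ▸ hdvd⟩
  · rintro ⟨i, j, rfl, hdvd⟩
    refine ⟨List.replicate i α ++ List.replicate j (conjC n α), by simp, ?_, by simpa using hdvd⟩
    intro y hy
    rcases List.mem_append.1 hy with h | h <;> rw [List.eq_of_mem_replicate h] <;>
      exact ⟨0, by simp⟩

theorem gamma_id_eq_multiplicities_general {n : ℕ} (α : R n) (hα : Irreducible α)
    (x : R n) (a b : ℕ)
    (ha : IsGreatest {k : ℕ | α ^ k ∣ x} a)
    (hb : IsGreatest {k : ℕ | (conjC n α) ^ k ∣ x} b) :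
    (¬ Associated α (conjC n α) → Gamma α 1 x = a + b) ∧
    (Associated α (conjC n α) → Gamma α 1 x = a) := by
  have hconj : Prime (conjC n α) := ((MulEquiv.irreducible_iff (conjC n)).2 hα).prime
  rw [Gamma, gammaSet_one_eq]
  exact ⟨fun hne => (isGreatest_pow_mul_pow_dvd_of_not_associated hα hconj hne ha hb).csSup_eq,
    fun hassoc => (isGreatest_pow_mul_pow_dvd_of_associated hassoc ha).csSup_eq⟩

/-- **Computation of `Γ` for the identity automorphism.**  For irreducible `α` and
nonzero `x`, with `a` the multiplicity of `α` in `x` and `b` the multiplicity of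
`ᾱ` in `x`:  if `α` and `ᾱ` are not associates then `Γ_{α,id}(x) = a + b`, and if
they are associates then `Γ_{α,id}(x) = a`. -/
theorem gamma_id_eq_multiplicities {n : ℕ} (α : R n) (hα : Irreducible α)
    (x : R n) (hx : x ≠ 0) (a b : ℕ)
    (ha : IsGreatest {k : ℕ | α ^ k ∣ x} a)
    (hb : IsGreatest {k : ℕ | (conjC n α) ^ k ∣ x} b) :
    (¬ Associated α (conjC n α) → Gamma α 1 x = a + b) ∧
    (Associated α (conjC n α) → Gamma α 1 x = a) :=
  gamma_id_eq_multiplicities_general α hα x a b ha hb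
end
end
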